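/- arXiv:1808.08479 — 5 statements merged into one kernel-verified Lean document; each statement's English description precedes it below -/
import Mathlib

section
/- Let n ≥ 1 and let c_1,…,c_n be real numbers with ∑_{i=1}^n c_i = 0 such that ∑_{i∈I} c_i ≠ 0 for every nonempty proper subset I ⊆ {1,…,n}. Then ∑_{σ ∈ S_n} ∏_{k=1}^{n−1} sgn(c_{σ(1)} + ⋯ + c_{σ(k)}) equals (n−1)! if n is odd, and equals 0 if n is even. Equivalently, with F^{(0)}_n(c_1,…,c_n) = 2^{1−n} ∏_{k=1}^{n−1} sgn(c_1+⋯+c_k), the symmetrization (1/n!)∑_{σ∈S_n} F^{(0)}_n(c_{σ(1)},…,c_{σ(n)}) equals 2^{1−n}/n for n odd and 0 for n even, irrespective of the values of the c_i. -/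
/-!
A rotation `j ↦ p (j + t)` of a sequence `p` with `∑ p = 0` has as partial sums the differences
`S u - S t` (`u ≠ t`) of the prefix sums `S` of `p`, and genericity makes the `S u` pairwise
distinct. So the sign product of the rotation by `t` is `(-1) ^ r`, where `r` is the rank of
`S t` among the `S u`, and the sum over all `n` rotations is `1 - 1 + 1 - ⋯`, that is `1` for
odd `n` and `0` for even `n`. Rotations act freely on `S_n` by right multiplication, so the sum
over all permutations is `n! / n` times this.
-/

open Finset Function

section Rank
variable {ι : Type*} [Fintype ι]

lemma card_filter_lt_lt_card_filter_lt {α : Type*} [LinearOrder α] {f : ι → α} {a b : ι}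
    (h : f a < f b) : #{u | f u < f a} < #{u | f u < f b} := by
  refine card_lt_card ⟨fun u hu => ?_, fun hsub => ?_⟩
  · simp only [mem_filter, mem_univ, true_and] at hu ⊢
    exact hu.trans h
  · exact lt_irrefl _ (mem_filter.mp (hsub (mem_filter.mpr ⟨mem_univ a, h⟩))).2

theorem sum_comp_card_filter_lt {α M : Type*} [LinearOrder α] [AddCommMonoid M] {f : ι → α}
    (hf : Injective f) (g : ℕ → M) :
    ∑ t, g #{u | f u < f t} = ∑ i ∈ range (Fintype.card ι), g i := by
  have hinj : Injective fun t => #{u | f u < f t} := by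
    intro a b hab
    by_contra hne
    rcases (hf.ne hne).lt_or_gt with h | h
    · exact (card_filter_lt_lt_card_filter_lt h).ne hab
    · exact (card_filter_lt_lt_card_filter_lt h).ne' hab
  have himage : univ.image (fun t => #{u | f u < f t}) = range (Fintype.card ι) := by
    refine eq_of_subset_of_card_le (fun i hi => ?_) ?_
    · obtain ⟨t, -, rfl⟩ := mem_image.mp hi
      exact mem_range.mpr (card_lt_univ_of_notMem (x := t) (by simp))
    · rw [card_image_of_injective _ hinj, card_range, card_univ]
  rw [← himage, sum_image fun a _ b _ h => hinj h]

variable [DecidableEq ι] {f : ι → ℝ}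

theorem prod_erase_sign_sub (hf : Injective f) (t : ι) :
    ∏ u ∈ univ.erase t, Real.sign (f u - f t) = (-1) ^ #{u | f u < f t} := by
  have hsign : ∀ u ∈ univ.erase t, Real.sign (f u - f t) = if f u < f t then -1 else 1 := by
    intro u hu
    rcases (hf.ne (ne_of_mem_erase hu)).lt_or_gt with h | h
    · rw [if_pos h, Real.sign_of_neg (sub_neg.mpr h)]
    · rw [if_neg h.not_gt, Real.sign_of_pos (sub_pos.mpr h)]
  rw [prod_congr rfl hsign, prod_ite, prod_const, prod_const_one, mul_one, filter_erase,
    erase_eq_of_notMem (by simp)]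

theorem sum_prod_erase_sign_sub (hf : Injective f) :
    ∑ t, ∏ u ∈ univ.erase t, Real.sign (f u - f t)
      = if Odd (Fintype.card ι) then 1 else 0 := by
  simp only [prod_erase_sign_sub hf, sum_comp_card_filter_lt hf (fun i => (-1 : ℝ) ^ i),
    neg_one_geom_sum, ← Nat.not_odd_iff_even, ite_not]

end Rank

theorem sum_comp_perm_ne_zero {ι M : Type*} [Fintype ι] [AddCommMonoid M] {c : ι → M}
    (hc : ∀ I : Finset ι, I.Nonempty → I ≠ univ → ∑ i ∈ I, c i ≠ 0)
    (σ : Equiv.Perm ι) (I : Finset ι) (hne : I.Nonempty) (hI : I ≠ univ) :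
    ∑ i ∈ I, c (σ i) ≠ 0 := by
  have hmap : I.map σ.toEmbedding ≠ univ := fun h =>
    hI (by rwa [← map_univ_equiv σ, map_inj] at h)
  simpa using hc _ hne.map hmap

theorem card_nsmul_sum_eq_sum_sum_mul {G ι M : Type*} [Group G] [Fintype G] [Fintype ι]
    [AddCommMonoid M] (P : G → M) (h : ι → G) :
    Fintype.card ι • ∑ g, P g = ∑ g, ∑ t, P (g * h t) := by
  rw [sum_comm, ← card_univ, ← sum_const]
  exact sum_congr rfl fun t _ => (Equiv.sum_comp (Equiv.mulRight (h t)) P).symm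

namespace Fin

theorem prod_erase_eq_prod_add_succ {N : Type*} [CommMonoid N] {m : ℕ} (F : Fin (m + 1) → N)
    (t : Fin (m + 1)) : ∏ u ∈ univ.erase t, F u = ∏ k : Fin m, F (t + k.succ) := by
  rw [← prod_equiv (Equiv.addLeft t) (s := univ.erase 0) (fun i => by simp) (g := F)
    (fun _ _ => rfl), univ_succ, erase_cons, prod_map]
  rfl

end Fin

section Cyclic
variable {M : Type*} [AddCommGroup M] {m : ℕ} (p : Fin (m + 1) → M)

def prefixSum (a : Fin (m + 1)) : M := ∑ j ∈ Iio a, p j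

variable {p}

theorem prefixSum_add_one (hp : ∑ j, p j = 0) (a : Fin (m + 1)) :
    prefixSum p (a + 1) = prefixSum p a + p a := by
  induction a using Fin.lastCases with
  | last =>
    rw [Fin.last_add_one, prefixSum, prefixSum, ← bot_eq_zero, Iio_bot, sum_empty,
      Fin.Iio_last_eq_map, sum_map, ← hp, Fin.sum_univ_castSucc]
    rfl
  | cast i =>
    have hIio : Iio i.succ = insert i.castSucc (Iio i.castSucc) := by
      ext j
      simp only [mem_Iio, mem_insert, Fin.lt_def, Fin.ext_iff, Fin.val_succ, Fin.val_castSucc]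
      omega
    rw [Fin.coeSucc_eq_succ, prefixSum, prefixSum, hIio, sum_insert (by simp), add_comm]

theorem sum_Iic_comp_add (hp : ∑ j, p j = 0) (t j : Fin (m + 1)) :
    ∑ i ∈ Iic j, p (i + t) = prefixSum p (t + (j + 1)) - prefixSum p t := by
  induction j using Fin.induction with
  | zero =>
    rw [← bot_eq_zero, Iic_bot, sum_singleton, bot_eq_zero, zero_add, zero_add,
      prefixSum_add_one hp, add_sub_cancel_left]
  | succ i ih =>
    have hIic : Iic i.succ = insert i.succ (Iic i.castSucc) := by
      ext j
      simp only [mem_Iic, mem_insert, Fin.le_def, Fin.ext_iff, Fin.val_succ, Fin.val_castSucc]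
      omega
    rw [hIic, sum_insert (by simp [Fin.le_def]), ih, Fin.coeSucc_eq_succ, ← add_assoc t,
      prefixSum_add_one hp, add_comm i.succ t]
    abel

theorem prefixSum_sub_prefixSum {a b : Fin (m + 1)} (h : a ≤ b) :
    prefixSum p b - prefixSum p a = ∑ j ∈ Ico a b, p j := by
  rw [prefixSum, prefixSum, Iio_eq_Ico, Iio_eq_Ico, ← Ico_union_Ico_eq_Ico bot_le h,
    sum_union (Ico_disjoint_Ico_consecutive _ _ _), add_sub_cancel_left]

theorem prefixSum_injective
    (hgen : ∀ I : Finset (Fin (m + 1)), I.Nonempty → I ≠ univ → ∑ i ∈ I, p i ≠ 0) :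
    Injective (prefixSum p) := by
  intro a b hab
  by_contra hne
  wlog h : a < b generalizing a b
  · exact this hab.symm (Ne.symm hne) ((not_lt.mp h).lt_of_ne (Ne.symm hne))
  refine hgen (Ico a b) (nonempty_Ico.mpr h) (fun hI => ?_) ?_
  · have hb : b ∈ Ico a b := hI ▸ mem_univ b
    simp at hb
  · rw [← prefixSum_sub_prefixSum h.le, hab, sub_self]

end Cyclic

theorem sum_prod_sign_sum_comp_add {m : ℕ} {p : Fin (m + 1) → ℝ} (hp : ∑ j, p j = 0)
    (hgen : ∀ I : Finset (Fin (m + 1)), I.Nonempty → I ≠ univ → ∑ i ∈ I, p i ≠ 0) :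
    ∑ t, ∏ k ∈ range m,
        Real.sign (∑ j ∈ univ.filter (fun j : Fin (m + 1) => (j : ℕ) ≤ k), p (j + t))
      = if Odd (m + 1) then 1 else 0 := by
  have hrot (t : Fin (m + 1)) : ∏ k ∈ range m,
        Real.sign (∑ j ∈ univ.filter (fun j : Fin (m + 1) => (j : ℕ) ≤ k), p (j + t))
      = ∏ u ∈ univ.erase t, Real.sign (prefixSum p u - prefixSum p t) := by
    rw [Fin.prod_erase_eq_prod_add_succ, ← Fin.prod_univ_eq_prod_range]
    refine prod_congr rfl fun k _ => ?_
    have hfilter : ({j | (j : ℕ) ≤ k} : Finset (Fin (m + 1))) = Iic k.castSucc := by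
      ext j
      simp [Fin.le_def]
    rw [hfilter, sum_Iic_comp_add hp, Fin.coeSucc_eq_succ]
  rw [sum_congr rfl fun t _ => hrot t, sum_prod_erase_sign_sub (prefixSum_injective hgen),
    Fintype.card_fin]

/-- for `c₁,…,c_n` summing to zero, with no proper nonempty subset summing
to zero, the sum over permutations of the product of signs of partial sums equals
`(n−1)!` for odd `n` and `0` for even `n`; equivalently the symmetrization of
`F⁰_n = 2^{1−n} ∏ sgn(S_k)` equals `2^{1−n}/n` for odd `n` and `0` for even `n`. -/
theorem sym_sign_partial_sums (n : ℕ) (hn : 1 ≤ n) (c : Fin n → ℝ)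
    (hsum : ∑ i, c i = 0)
    (hgen : ∀ I : Finset (Fin n), I.Nonempty → I ≠ Finset.univ → ∑ i ∈ I, c i ≠ 0) :
    (∑ σ : Equiv.Perm (Fin n), ∏ k ∈ Finset.range (n - 1),
        Real.sign (∑ j ∈ Finset.univ.filter (fun j : Fin n => (j : ℕ) ≤ k), c (σ j))
      = if Odd n then ((n - 1).factorial : ℝ) else 0) ∧
    ((n.factorial : ℝ)⁻¹ * ∑ σ : Equiv.Perm (Fin n), ((2 : ℝ) ^ (n - 1))⁻¹ *
        ∏ k ∈ Finset.range (n - 1),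
          Real.sign (∑ j ∈ Finset.univ.filter (fun j : Fin n => (j : ℕ) ≤ k), c (σ j))
      = if Odd n then ((2 : ℝ) ^ (n - 1))⁻¹ / n else 0) := by
  obtain ⟨m, rfl⟩ := Nat.exists_eq_add_of_le' hn
  simp only [Nat.add_sub_cancel]
  set P : Equiv.Perm (Fin (m + 1)) → ℝ := fun σ => ∏ k ∈ range m,
    Real.sign (∑ j ∈ univ.filter (fun j : Fin (m + 1) => (j : ℕ) ≤ k), c (σ j))
  have hrot (σ : Equiv.Perm (Fin (m + 1))) :
      ∑ t, P (σ * Equiv.addRight t) = if Odd (m + 1) then 1 else 0 :=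
    sum_prod_sign_sum_comp_add (p := fun j => c (σ j)) (by rwa [Equiv.sum_comp])
      (sum_comp_perm_ne_zero hgen σ)
  have hcount : ((m + 1 : ℕ) : ℝ) * ∑ σ, P σ
      = (m + 1).factorial * if Odd (m + 1) then 1 else 0 := by
    have := card_nsmul_sum_eq_sum_sum_mul P (Equiv.addRight : Fin (m + 1) → _)
    simpa [hrot, Fintype.card_perm] using this
  have hS : ∑ σ, P σ = if Odd (m + 1) then (m.factorial : ℝ) else 0 := by
    refine mul_left_cancel₀ (Nat.cast_add_one_ne_zero m) ?_
    rw [← Nat.cast_succ, hcount, Nat.factorial_succ, Nat.cast_mul]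
    split_ifs <;> ring
  refine ⟨hS, ?_⟩
  rw [← mul_sum, hS]
  split_ifs
  · rw [Nat.factorial_succ]; push_cast; field_simp
  · simp
end

section
/- With the notation of the context, assume S_ℓ ≠ 0 and Γ_{nℓ} ≠ 0 for all 1 ≤ ℓ ≤ n−1, and S_j·Γ_{nℓ} − S_ℓ·Γ_{nj} ≠ 0 for all 1 ≤ j ≠ ℓ ≤ n−1. Then for an arbitrary sequence of real coefficients (b_k)_{k≥1}, the functions F_m satisfy the recursion: (1/2) ∑_{ℓ=1}^{n−1} (sgn(S_ℓ) − sgn(Γ_{nℓ})) · F_ℓ(c_1^{(ℓ)},…,c_ℓ^{(ℓ)}) · F_{n−ℓ}(c_{ℓ+1}^{(ℓ)},…,c_n^{(ℓ)}) = F_n(c_1,…,c_n) − F_n(β_{n1},…,β_{nn}). -/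
/-!
Write `2^{m-1} F_m(x)` as a sum over the compositions `C` of `m` of
`b_C ∏_{j ∈ J(C)} sgn(x₁ + ⋯ + x_j)`, where `J(C) ⊆ {1, …, m-1}` is the set of cut points of `C`.
The partial sums of `c^{(ℓ)}` vanish at `ℓ`, so `F_ℓ F_{n-ℓ}` in the `ℓ`-th term becomes the sum
over the compositions of `n` cut at `ℓ`, with the sign factor at `ℓ` omitted. After exchanging
the two sums the recursion splits into one identity per composition: for `D = J(C)`,
`s_j = S_j`, `g_j = Γ_{nj}`,
`∑_{ℓ ∈ D} (sgn s_ℓ - sgn g_ℓ) ∏_{j ∈ D, j ≠ ℓ} sgn(s_j - g_j s_ℓ / g_ℓ)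
  = ∏_D sgn s_j - ∏_D sgn g_j`.
Factoring out `∏_D sgn g_j` reduces it to the case `g = 1` for `r = s / g`, which follows by
induction on `D`, removing the element with the largest `r`: the hypotheses on `S` and `Γ` make
the `r_j` nonzero and pairwise distinct, so the new factor `sgn(r_max - r_ℓ)` of every other term
is `1`.
-/

/-- `Fcomp b (x₁,…,x_m) = 2^{1−m} ∑_{m₁+⋯+m_r = m} ∏ₖ b_{m_k} ∏_{k=1}^{r−1} sgn(x₁+⋯+x_{j_k})`,
the sum running over ordered compositions of `m` (encoded as lists of positive naturals
summing to `m`), where `j_k = m₁ + ⋯ + m_k`. -/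
noncomputable def Fcomp (b : ℕ → ℝ) (x : List ℝ) : ℝ :=
  ((2 : ℝ) ^ (x.length - 1))⁻¹ *
    ∑ᶠ L ∈ {L : List ℕ | L.sum = x.length ∧ ∀ q ∈ L, 0 < q},
      (L.map b).prod *
        ∏ k ∈ Finset.range (L.length - 1),
          Real.sign ((x.take ((L.take (k + 1)).sum)).sum)

open Finset

namespace Real

theorem sign_mul (x y : ℝ) : sign (x * y) = sign x * sign y := by
  rcases lt_trichotomy x 0 with hx | hx | hx <;> rcases lt_trichotomy y 0 with hy | hy | hy <;>
    simp [sign_of_neg, sign_of_pos, hx, hy, mul_pos_of_neg_of_neg, mul_neg_of_pos_of_neg,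
      mul_neg_of_neg_of_pos]

end Real

section SignIdentity

variable {ι : Type*} [DecidableEq ι]

theorem sum_sign_sub_one_mul_prod_sign_sub (D : Finset ι) (r : ι → ℝ)
    (hr : ∀ j ∈ D, r j ≠ 0) (hinj : Set.InjOn r D) :
    ∑ ℓ ∈ D, (Real.sign (r ℓ) - 1) * ∏ j ∈ D.erase ℓ, Real.sign (r j - r ℓ)
      = ∏ j ∈ D, Real.sign (r j) - 1 := by
  induction D using Finset.induction_on_max_value r with
  | empty => simp
  | insert a D ha hmax ih =>
    have hlt : ∀ j ∈ D, r j < r a := fun j hj => (hmax j hj).lt_of_ne fun h =>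
      ne_of_mem_of_not_mem hj ha (hinj (mem_insert_of_mem hj) (mem_insert_self a D) h)
    have hterm : ∀ ℓ ∈ D, (Real.sign (r ℓ) - 1) * ∏ j ∈ (insert a D).erase ℓ, Real.sign (r j - r ℓ)
        = (Real.sign (r ℓ) - 1) * ∏ j ∈ D.erase ℓ, Real.sign (r j - r ℓ) := fun ℓ hℓ => by
      rw [erase_insert_of_ne (ne_of_mem_of_not_mem hℓ ha).symm,
        prod_insert fun h => ha (mem_of_mem_erase h), Real.sign_of_pos (sub_pos.2 (hlt ℓ hℓ)),
        one_mul]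
    rw [sum_insert ha, sum_congr rfl hterm, ih (fun j hj => hr j (mem_insert_of_mem hj))
      (hinj.mono (subset_insert a D)), erase_insert ha, prod_insert ha]
    rcases (hr a (mem_insert_self a D)).lt_or_gt with hneg | hpos
    · rw [prod_congr rfl fun j hj => Real.sign_of_neg (sub_neg.2 (hlt j hj)),
        prod_congr rfl fun j hj => Real.sign_of_neg ((hlt j hj).trans hneg), Real.sign_of_neg hneg]
      ring
    · rw [Real.sign_of_pos hpos]
      ring

theorem sum_sign_sub_sign_mul_prod_sign (D : Finset ι) (s g : ι → ℝ)
    (hs : ∀ j ∈ D, s j ≠ 0) (hg : ∀ j ∈ D, g j ≠ 0)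
    (hsg : ∀ j ∈ D, ∀ ℓ ∈ D, j ≠ ℓ → s j * g ℓ - s ℓ * g j ≠ 0) :
    ∑ ℓ ∈ D, (Real.sign (s ℓ) - Real.sign (g ℓ)) *
        ∏ j ∈ D.erase ℓ, Real.sign (s j - g j / g ℓ * s ℓ)
      = ∏ j ∈ D, Real.sign (s j) - ∏ j ∈ D, Real.sign (g j) := by
  set r : ι → ℝ := fun j => s j / g j
  have hsign : ∀ j ∈ D, Real.sign (s j) = Real.sign (g j) * Real.sign (r j) := fun j hj => by
    rw [← Real.sign_mul, mul_div_cancel₀ _ (hg j hj)]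
  have hinj : Set.InjOn r D := fun j hj ℓ hℓ h => by
    by_contra hjℓ
    refine hsg j hj ℓ hℓ hjℓ (sub_eq_zero.2 ?_)
    rwa [div_eq_div_iff (hg j hj) (hg ℓ hℓ)] at h
  have hterm : ∀ ℓ ∈ D, (Real.sign (s ℓ) - Real.sign (g ℓ)) *
      ∏ j ∈ D.erase ℓ, Real.sign (s j - g j / g ℓ * s ℓ)
        = (∏ j ∈ D, Real.sign (g j)) *
          ((Real.sign (r ℓ) - 1) * ∏ j ∈ D.erase ℓ, Real.sign (r j - r ℓ)) := fun ℓ hℓ => by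
    have hfactor : ∀ j ∈ D.erase ℓ, s j - g j / g ℓ * s ℓ = g j * (r j - r ℓ) := fun j hj => by
      simp only [r]
      field_simp [hg j (mem_of_mem_erase hj), hg ℓ hℓ]
    rw [prod_congr rfl fun j hj => by rw [hfactor j hj, Real.sign_mul], prod_mul_distrib,
      ← mul_prod_erase D _ hℓ, hsign ℓ hℓ]
    ring
  rw [sum_congr rfl hterm, ← mul_sum, sum_sign_sub_one_mul_prod_sign_sub D r
    (fun j hj => div_ne_zero (hs j hj) (hg j hj)) hinj, prod_congr rfl hsign, prod_mul_distrib]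
  ring

end SignIdentity

def compositions (m : ℕ) : Finset (List ℕ) :=
  univ.image (Composition.blocks (n := m))

theorem mem_compositions {m : ℕ} {L : List ℕ} :
    L ∈ compositions m ↔ L.sum = m ∧ ∀ q ∈ L, 0 < q := by
  constructor
  · intro hL
    obtain ⟨C, -, rfl⟩ := mem_image.1 hL
    exact ⟨C.blocks_sum, fun q hq => C.blocks_pos hq⟩
  · rintro ⟨hsum, hpos⟩
    exact mem_image.2 ⟨⟨L, hpos _, hsum⟩, mem_univ _, rfl⟩

/-- The points `j_k = m₁ + ⋯ + m_k`, `0 < k < r`, of a composition `[m₁, …, m_r]`. -/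
def cutPoints (L : List ℕ) : Finset ℕ :=
  (Ioo 0 L.length).image fun k => (L.take k).sum

section CutPoints

variable {L : List ℕ}

theorem sum_take_strictMonoOn (hpos : ∀ q ∈ L, 0 < q) :
    StrictMonoOn (fun k => (L.take k).sum) (Set.Iic L.length) := by
  intro i _ j hj hij
  have hne : (L.drop i).take (j - i) ≠ [] := by
    rw [Set.mem_Iic] at hj
    simp only [ne_eq, List.take_eq_nil_iff, List.drop_eq_nil_iff, not_or]
    omega
  have hsplit : L.take j = L.take i ++ (L.drop i).take (j - i) := by
    rw [← List.take_add, Nat.add_sub_cancel' hij.le]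
  simp only [hsplit, List.sum_append, lt_add_iff_pos_right]
  exact List.sum_pos _ (fun q hq => hpos q (List.mem_of_mem_drop (List.mem_of_mem_take hq))) hne

theorem cutPoints_subset_Ioo (hpos : ∀ q ∈ L, 0 < q) : cutPoints L ⊆ Ioo 0 L.sum := by
  intro j hj
  obtain ⟨k, hk, rfl⟩ := mem_image.1 hj
  rw [mem_Ioo] at hk ⊢
  have hmono := sum_take_strictMonoOn hpos
  constructor
  · simpa using hmono (by simp) (Set.mem_Iic.2 hk.2.le) hk.1
  · simpa using hmono (Set.mem_Iic.2 hk.2.le) (by simp) hk.2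

theorem prod_cutPoints {M : Type*} [CommMonoid M] (hpos : ∀ q ∈ L, 0 < q) (f : ℕ → M) :
    ∏ j ∈ cutPoints L, f j = ∏ k ∈ range (L.length - 1), f (L.take (k + 1)).sum := by
  rw [cutPoints, prod_image ((sum_take_strictMonoOn hpos).injOn.mono fun k hk =>
    Set.mem_Iic.2 (mem_Ioo.1 hk).2.le)]
  exact (prod_Ico_eq_prod_range _ 1 L.length).trans (prod_congr rfl fun k _ => by rw [add_comm])

end CutPoints

theorem sum_take_append (A B : List ℕ) (k : ℕ) :
    ((A ++ B).take k).sum = (A.take k).sum + (B.take (k - A.length)).sum := by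
  rw [List.take_append, List.sum_append]

theorem cutPoints_append {A B : List ℕ} (hA : A ≠ []) (hB : B ≠ []) :
    cutPoints (A ++ B) =
      insert A.sum (cutPoints A ∪ (cutPoints B).map (addLeftEmbedding A.sum)) := by
  have hA' := List.length_pos_iff.2 hA
  have hB' := List.length_pos_iff.2 hB
  ext j
  simp only [cutPoints, mem_insert, mem_union, mem_map, mem_image, mem_Ioo, List.length_append,
    sum_take_append, addLeftEmbedding_apply]
  constructor
  · rintro ⟨k, hk, rfl⟩
    rcases lt_trichotomy k A.length with hlt | rfl | hgt
    · exact Or.inr (Or.inl ⟨k, ⟨hk.1, hlt⟩, by simp [Nat.sub_eq_zero_of_le hlt.le]⟩)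
    · exact Or.inl (by simp)
    · refine Or.inr (Or.inr ⟨_, ⟨k - A.length, ⟨by omega, by omega⟩, rfl⟩, ?_⟩)
      rw [List.take_of_length_le hgt.le]
  · rintro (rfl | ⟨k, hk, rfl⟩ | ⟨_, ⟨k, hk, rfl⟩, rfl⟩)
    · exact ⟨A.length, ⟨hA', by omega⟩, by simp⟩
    · exact ⟨k, ⟨hk.1, by omega⟩, by simp [Nat.sub_eq_zero_of_le hk.2.le]⟩
    · exact ⟨A.length + k, ⟨by omega, by omega⟩, by simp [List.take_of_length_le]⟩

theorem prod_erase_cutPoints_append {M : Type*} [CommMonoid M] {A B : List ℕ}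
    (hA : ∀ q ∈ A, 0 < q) (hB : ∀ q ∈ B, 0 < q) (hA0 : A ≠ []) (hB0 : B ≠ []) (f : ℕ → M) :
    ∏ j ∈ (cutPoints (A ++ B)).erase A.sum, f j
      = (∏ j ∈ cutPoints A, f j) * ∏ j ∈ cutPoints B, f (A.sum + j) := by
  have hlow : ∀ j ∈ cutPoints A, j < A.sum := fun j hj => (mem_Ioo.1 (cutPoints_subset_Ioo hA hj)).2
  have hhigh : ∀ j ∈ (cutPoints B).map (addLeftEmbedding A.sum), A.sum < j := by
    intro j hj
    obtain ⟨i, hi, rfl⟩ := mem_map.1 hj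
    simpa using (mem_Ioo.1 (cutPoints_subset_Ioo hB hi)).1
  have hdisj : Disjoint (cutPoints A) ((cutPoints B).map (addLeftEmbedding A.sum)) :=
    disjoint_left.2 fun j hjA hjB => (hlow j hjA).not_gt (hhigh j hjB)
  have hnotin : A.sum ∉ cutPoints A ∪ (cutPoints B).map (addLeftEmbedding A.sum) := by
    rw [mem_union, not_or]
    exact ⟨fun h => (hlow _ h).false, fun h => (hhigh _ h).false⟩
  rw [cutPoints_append hA0 hB0, erase_insert hnotin, prod_union hdisj, prod_map]
  rfl

theorem ne_nil_of_mem_compositions {m : ℕ} {L : List ℕ} (hm : 0 < m) (hL : L ∈ compositions m) :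
    L ≠ [] := by
  rintro rfl
  exact hm.ne (mem_compositions.1 hL).1

theorem sum_compositions_append {M : Type*} [AddCommMonoid M] {ℓ m : ℕ} (hℓ : 0 < ℓ)
    (hℓm : ℓ < m) (f : List ℕ → M) :
    ∑ A ∈ compositions ℓ, ∑ B ∈ compositions (m - ℓ), f (A ++ B)
      = ∑ C ∈ (compositions m).filter (ℓ ∈ cutPoints ·), f C := by
  rw [← sum_product']
  refine sum_nbij (fun p => p.1 ++ p.2) ?_ ?_ ?_ fun _ _ => rfl
  · rintro ⟨A, B⟩ hAB
    obtain ⟨hA, hB⟩ := mem_product.1 hAB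
    obtain ⟨hAsum, hApos⟩ := mem_compositions.1 hA
    obtain ⟨hBsum, hBpos⟩ := mem_compositions.1 hB
    refine mem_filter.2 ⟨mem_compositions.2 ⟨by simp [hAsum, hBsum, hℓm.le], ?_⟩, ?_⟩
    · simpa only [List.mem_append] using fun q hq => hq.elim (hApos q) (hBpos q)
    · rw [cutPoints_append (ne_nil_of_mem_compositions hℓ hA)
        (ne_nil_of_mem_compositions (by omega) hB), hAsum]
      exact mem_insert_self _ _
  · rintro ⟨A, B⟩ hAB ⟨A', B'⟩ hAB' (h : A ++ B = A' ++ B')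
    obtain ⟨hAsum, hApos⟩ := mem_compositions.1 (mem_product.1 hAB).1
    obtain ⟨hAsum', hApos'⟩ := mem_compositions.1 (mem_product.1 hAB').1
    have hnil : ∀ {X Y : List ℕ}, (∀ q ∈ X ++ Y, 0 < q) → (X ++ Y).sum = X.sum → Y = [] :=
      fun hpos hsum => List.eq_nil_iff_forall_not_mem.2 fun q hq =>
        (hpos q (List.mem_append_right _ hq)).ne'
          (List.sum_eq_zero_iff.1 (by simpa using hsum) q hq)
    rcases List.append_eq_append_iff.1 h with ⟨X, rfl, rfl⟩ | ⟨X, rfl, rfl⟩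
    · rw [hnil hApos' (hAsum'.trans hAsum.symm)]
      simp
    · rw [hnil hApos (hAsum.trans hAsum'.symm)]
      simp
  · intro C hC
    obtain ⟨hCm, hcut⟩ := mem_filter.1 hC
    obtain ⟨hsum, hpos⟩ := mem_compositions.1 hCm
    obtain ⟨k, hk, hkℓ⟩ := mem_image.1 hcut
    have hsum_drop : (C.take k).sum + (C.drop k).sum = m := by
      rw [← List.sum_append, List.take_append_drop, hsum]
    refine ⟨(C.take k, C.drop k), mem_product.2 ⟨mem_compositions.2 ⟨hkℓ, ?_⟩,
      mem_compositions.2 ⟨by dsimp only; omega, ?_⟩⟩, List.take_append_drop k C⟩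
    · exact fun q hq => hpos q (List.mem_of_mem_take hq)
    · exact fun q hq => hpos q (List.mem_of_mem_drop hq)

theorem Fcomp_eq_sum_compositions (b : ℕ → ℝ) (x : List ℝ) :
    Fcomp b x = ((2 : ℝ) ^ (x.length - 1))⁻¹ * ∑ L ∈ compositions x.length,
      (L.map b).prod * ∏ j ∈ cutPoints L, Real.sign (x.take j).sum := by
  rw [Fcomp, ← finsum_mem_coe_finset]
  congr 1
  refine finsum_mem_congr (Set.ext fun L => mem_compositions.symm) fun L hL => ?_
  rw [prod_cutPoints (mem_compositions.1 hL).2]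

theorem Fcomp_take_mul_Fcomp_drop (b : ℕ → ℝ) {x : List ℝ} {ℓ : ℕ} (hℓ : 0 < ℓ)
    (hℓx : ℓ < x.length) (hx : (x.take ℓ).sum = 0) :
    Fcomp b (x.take ℓ) * Fcomp b (x.drop ℓ) = ((2 : ℝ) ^ (x.length - 2))⁻¹ *
      ∑ C ∈ (compositions x.length).filter (ℓ ∈ cutPoints ·),
        (C.map b).prod * ∏ j ∈ (cutPoints C).erase ℓ, Real.sign (x.take j).sum := by
  have hpow : ((2 : ℝ) ^ (ℓ - 1))⁻¹ * ((2 : ℝ) ^ (x.length - ℓ - 1))⁻¹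
      = ((2 : ℝ) ^ (x.length - 2))⁻¹ := by
    rw [← mul_inv, ← pow_add]
    congr 2
    omega
  have htake : ∀ A ∈ compositions ℓ, ∀ j ∈ cutPoints A, (x.take ℓ).take j = x.take j :=
    fun A hA j hj => by
      have hjA := (mem_Ioo.1 (cutPoints_subset_Ioo (mem_compositions.1 hA).2 hj)).2
      have hAℓ := (mem_compositions.1 hA).1
      rw [List.take_take, min_eq_left (by omega)]
  have hdrop : ∀ j, ((x.drop ℓ).take j).sum = (x.take (ℓ + j)).sum := fun j => by
    rw [List.take_add, List.sum_append, hx, zero_add]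
  rw [Fcomp_eq_sum_compositions, Fcomp_eq_sum_compositions, List.length_take,
    List.length_drop, min_eq_left hℓx.le, mul_mul_mul_comm, hpow, sum_mul_sum,
    ← sum_compositions_append hℓ hℓx]
  refine congrArg _ (sum_congr rfl fun A hA => sum_congr rfl fun B hB => ?_)
  obtain ⟨hAsum, hApos⟩ := mem_compositions.1 hA
  obtain ⟨hBsum, hBpos⟩ := mem_compositions.1 hB
  have hsplit := prod_erase_cutPoints_append hApos hBpos (ne_nil_of_mem_compositions hℓ hA)
    (ne_nil_of_mem_compositions (by omega) hB) fun j => Real.sign (x.take j).sum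
  rw [hAsum] at hsplit
  rw [List.map_append, List.prod_append, hsplit, prod_congr rfl fun j hj => by
    rw [htake A hA j hj]]
  simp only [hdrop]
  ring

theorem Fcomp_take_mul_Fcomp_drop_ofFn_sub (b : ℕ → ℝ) {n : ℕ} (x y : Fin n → ℝ) (s g : ℕ → ℝ)
    (hs_def : ∀ j, ((List.ofFn x).take j).sum = s j)
    (hg_def : ∀ j, ((List.ofFn y).take j).sum = g j) {ℓ : ℕ} (hℓ : 0 < ℓ) (hℓn : ℓ < n)
    (hgℓ : g ℓ ≠ 0) :
    Fcomp b ((List.ofFn fun i => x i - y i / g ℓ * s ℓ).take ℓ) *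
        Fcomp b ((List.ofFn fun i => x i - y i / g ℓ * s ℓ).drop ℓ)
      = ((2 : ℝ) ^ (n - 2))⁻¹ * ∑ C ∈ (compositions n).filter (ℓ ∈ cutPoints ·),
          (C.map b).prod * ∏ j ∈ (cutPoints C).erase ℓ, Real.sign (s j - g j / g ℓ * s ℓ) := by
  have hsum : ∀ j, ((List.ofFn fun i => x i - y i / g ℓ * s ℓ).take j).sum
      = s j - g j / g ℓ * s ℓ := fun j => by
    simp only [List.sum_take_ofFn] at hs_def hg_def ⊢
    rw [sum_sub_distrib, ← sum_mul, ← sum_div, hs_def, hg_def]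
  rw [Fcomp_take_mul_Fcomp_drop b hℓ (by simpa using hℓn)
    (by rw [hsum, div_self hgℓ, one_mul, sub_self]), List.length_ofFn]
  simp only [hsum]

theorem half_sum_sign_sub_sign_mul_Fcomp_mul_Fcomp (b : ℕ → ℝ) {n : ℕ} (hn : 2 ≤ n)
    (x y : Fin n → ℝ) (s g : ℕ → ℝ) (hs_def : ∀ j, ((List.ofFn x).take j).sum = s j)
    (hg_def : ∀ j, ((List.ofFn y).take j).sum = g j) (hs : ∀ j ∈ Ioo 0 n, s j ≠ 0)
    (hg : ∀ j ∈ Ioo 0 n, g j ≠ 0)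
    (hsg : ∀ j ∈ Ioo 0 n, ∀ ℓ ∈ Ioo 0 n, j ≠ ℓ → s j * g ℓ - s ℓ * g j ≠ 0) :
    (1 / 2 : ℝ) * ∑ ℓ ∈ Ioo 0 n, (Real.sign (s ℓ) - Real.sign (g ℓ)) *
        Fcomp b ((List.ofFn fun i => x i - y i / g ℓ * s ℓ).take ℓ) *
        Fcomp b ((List.ofFn fun i => x i - y i / g ℓ * s ℓ).drop ℓ)
      = Fcomp b (List.ofFn x) - Fcomp b (List.ofFn y) := by
  have hcut : ∀ C ∈ compositions n, cutPoints C ⊆ Ioo 0 n := fun C hC => by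
    simpa only [(mem_compositions.1 hC).1] using cutPoints_subset_Ioo (mem_compositions.1 hC).2
  have hhalf : (1 / 2 : ℝ) * ((2 : ℝ) ^ (n - 2))⁻¹ = ((2 : ℝ) ^ (n - 1))⁻¹ := by
    rw [one_div, ← mul_inv, ← pow_succ', show n - 2 + 1 = n - 1 by omega]
  have hterm : ∀ ℓ ∈ Ioo 0 n, (Real.sign (s ℓ) - Real.sign (g ℓ)) *
        Fcomp b ((List.ofFn fun i => x i - y i / g ℓ * s ℓ).take ℓ) *
        Fcomp b ((List.ofFn fun i => x i - y i / g ℓ * s ℓ).drop ℓ)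
      = ((2 : ℝ) ^ (n - 2))⁻¹ * ∑ C ∈ (compositions n).filter (ℓ ∈ cutPoints ·),
          (C.map b).prod * ((Real.sign (s ℓ) - Real.sign (g ℓ)) *
            ∏ j ∈ (cutPoints C).erase ℓ, Real.sign (s j - g j / g ℓ * s ℓ)) := fun ℓ hℓ => by
    rw [mul_assoc, Fcomp_take_mul_Fcomp_drop_ofFn_sub b x y s g hs_def hg_def (mem_Ioo.1 hℓ).1
      (mem_Ioo.1 hℓ).2 (hg ℓ hℓ), mul_left_comm, mul_sum]
    simp only [mul_left_comm]
  rw [sum_congr rfl hterm, ← mul_sum, ← mul_assoc, hhalf, Fcomp_eq_sum_compositions,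
    Fcomp_eq_sum_compositions, List.length_ofFn, List.length_ofFn, ← mul_sub, ← sum_sub_distrib,
    sum_comm' (t' := compositions n) (s' := cutPoints) fun ℓ C => ?_]
  · refine congrArg _ (sum_congr rfl fun C hC => ?_)
    simp only [hs_def, hg_def]
    rw [← mul_sum, ← mul_sub, sum_sign_sub_sign_mul_prod_sign _ _ _
      (fun j hj => hs j (hcut C hC hj)) (fun j hj => hg j (hcut C hC hj))
      fun j hj ℓ hℓ => hsg j (hcut C hC hj) ℓ (hcut C hC hℓ)]
  · rw [mem_filter]
    exact ⟨fun ⟨_, hC, hℓ⟩ => ⟨hℓ, hC⟩, fun ⟨hℓ, hC⟩ => ⟨hcut C hC hℓ, hC, hℓ⟩⟩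

theorem Fcomp_recursion_general (n : ℕ) (hn : 2 ≤ n)
    (γ : Fin n → Fin n → ℝ)
    (c : Fin n → ℝ) (b : ℕ → ℝ)
    (S : ℕ → ℝ) (hS_def : ∀ k, S k = ∑ i ∈ Finset.univ.filter (fun i : Fin n => (i : ℕ) < k), c i)
    (β : Fin n → ℝ) (hβ_def : ∀ i, β i = ∑ j, γ j i)
    (Γ : ℕ → ℝ)
    (hΓ_def : ∀ ℓ, Γ ℓ = ∑ i, ∑ j ∈ Finset.univ.filter (fun j : Fin n => (j : ℕ) < ℓ), γ i j)
    (hS : ∀ ℓ, 1 ≤ ℓ → ℓ ≤ n - 1 → S ℓ ≠ 0)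
    (hΓ : ∀ ℓ, 1 ≤ ℓ → ℓ ≤ n - 1 → Γ ℓ ≠ 0)
    (hSΓ : ∀ j ℓ, 1 ≤ j → j ≤ n - 1 → 1 ≤ ℓ → ℓ ≤ n - 1 → j ≠ ℓ →
      S j * Γ ℓ - S ℓ * Γ j ≠ 0) :
    (1 / 2 : ℝ) * ∑ ℓ ∈ Finset.Icc 1 (n - 1),
        (Real.sign (S ℓ) - Real.sign (Γ ℓ)) *
          Fcomp b ((List.ofFn (fun i : Fin n => c i - (β i / Γ ℓ) * S ℓ)).take ℓ) *
          Fcomp b ((List.ofFn (fun i : Fin n => c i - (β i / Γ ℓ) * S ℓ)).drop ℓ)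
      = Fcomp b (List.ofFn c) - Fcomp b (List.ofFn β) := by
  have hIcc : Icc 1 (n - 1) = Ioo 0 n := by
    ext
    simp only [mem_Icc, mem_Ioo]
    omega
  have hbounds : ∀ {j}, j ∈ Ioo 0 n → 1 ≤ j ∧ j ≤ n - 1 := fun hj => mem_Icc.1 (hIcc ▸ hj)
  rw [hIcc]
  refine half_sum_sign_sub_sign_mul_Fcomp_mul_Fcomp b hn c β S Γ (fun j => ?_) (fun j => ?_)
    (fun j hj => hS j (hbounds hj).1 (hbounds hj).2)
    (fun j hj => hΓ j (hbounds hj).1 (hbounds hj).2)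
    fun j hj ℓ hℓ => hSΓ j ℓ (hbounds hj).1 (hbounds hj).2 (hbounds hℓ).1 (hbounds hℓ).2
  · rw [List.sum_take_ofFn, hS_def]
  · rw [List.sum_take_ofFn, hΓ_def, sum_comm]
    exact sum_congr rfl fun i _ => hβ_def i

/-- with `S_k = c₁+⋯+c_k`, `β_{ni} = ∑_j γ_{ji}`,
`Γ_{nℓ} = ∑_i ∑_{j≤ℓ} γ_{ij}`, `c_i^{(ℓ)} = c_i − (β_{ni}/Γ_{nℓ}) S_ℓ`, and assuming
`S_ℓ ≠ 0`, `Γ_{nℓ} ≠ 0` for `1 ≤ ℓ ≤ n−1` and `S_j Γ_{nℓ} − S_ℓ Γ_{nj} ≠ 0` for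
`j ≠ ℓ`, the functions `F_m` satisfy
`(1/2) ∑_ℓ (sgn S_ℓ − sgn Γ_{nℓ}) F_ℓ(c^{(ℓ)}₁..ℓ) F_{n−ℓ}(c^{(ℓ)}_{ℓ+1..n})
 = F_n(c₁,…,c_n) − F_n(β_{n1},…,β_{nn})` for an arbitrary sequence `b`. -/
theorem Fcomp_recursion (n : ℕ) (hn : 2 ≤ n)
    (γ : Fin n → Fin n → ℝ) (hanti : ∀ i j, γ i j = -γ j i)
    (c : Fin n → ℝ) (hc : ∑ i, c i = 0) (b : ℕ → ℝ)
    (S : ℕ → ℝ) (hS_def : ∀ k, S k = ∑ i ∈ Finset.univ.filter (fun i : Fin n => (i : ℕ) < k), c i)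
    (β : Fin n → ℝ) (hβ_def : ∀ i, β i = ∑ j, γ j i)
    (Γ : ℕ → ℝ)
    (hΓ_def : ∀ ℓ, Γ ℓ = ∑ i, ∑ j ∈ Finset.univ.filter (fun j : Fin n => (j : ℕ) < ℓ), γ i j)
    (hS : ∀ ℓ, 1 ≤ ℓ → ℓ ≤ n - 1 → S ℓ ≠ 0)
    (hΓ : ∀ ℓ, 1 ≤ ℓ → ℓ ≤ n - 1 → Γ ℓ ≠ 0)
    (hSΓ : ∀ j ℓ, 1 ≤ j → j ≤ n - 1 → 1 ≤ ℓ → ℓ ≤ n - 1 → j ≠ ℓ →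
      S j * Γ ℓ - S ℓ * Γ j ≠ 0) :
    (1 / 2 : ℝ) * ∑ ℓ ∈ Finset.Icc 1 (n - 1),
        (Real.sign (S ℓ) - Real.sign (Γ ℓ)) *
          Fcomp b ((List.ofFn (fun i : Fin n => c i - (β i / Γ ℓ) * S ℓ)).take ℓ) *
          Fcomp b ((List.ofFn (fun i : Fin n => c i - (β i / Γ ℓ) * S ℓ)).drop ℓ)
      = Fcomp b (List.ofFn c) - Fcomp b (List.ofFn β) :=
  Fcomp_recursion_general n hn γ c b S hS_def β hβ_def Γ hΓ_def hS hΓ hSΓ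
end

section
/- For every nonzero real number u: (i/π) ∫_ℝ e^{−πt²}/(t − iu) dt = −sgn(u) · e^{πu²} · (1 − 2∫_0^{|u|} e^{−πs²} ds). Equivalently, the function M_1(u) defined by the contour integral (i/π)∫_{ℝ−iu} e^{−πz² − 2πizu} dz/z (the contour being the horizontal line z = t − iu, t ∈ ℝ) equals −sgn(u)·Erfc(√π·|u|). -/
/-!
For `u > 0`, write `1/(t - iu) = 2πi ∫₀^∞ e^{-2π(u + it)y} dy`. After Fubini, the `t`-integral is
the Fourier transform of `e^{-πt²}`, which is `e^{-πy²}`, and what remains is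
`∫₀^∞ e^{-2πuy - πy²} dy = e^{πu²} ∫ᵤ^∞ e^{-πs²} ds = e^{πu²} (1/2 - ∫₀^u e^{-πs²} ds)`.
Substituting `t ↦ -t` shows that both sides are odd in `u`, which gives the case `u < 0`.
-/

open Complex MeasureTheory Set
open scoped Real

lemma integral_Ioi_cexp_neg_mul {c : ℂ} (hc : 0 < c.re) :
    ∫ x : ℝ in Ioi 0, cexp (-c * x) = c⁻¹ := by
  rw [integral_exp_mul_complex_Ioi (by simpa using hc)]
  simp

lemma inv_sub_I_mul_eq_integral_Ioi {u : ℝ} (hu : 0 < u) (t : ℝ) :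
    ((t : ℂ) - I * u)⁻¹ = 2 * π * I * ∫ y : ℝ in Ioi 0, cexp (-(2 * π * (u + t * I)) * y) := by
  rw [integral_Ioi_cexp_neg_mul (by simp [hu, Real.pi_pos])]
  have hu' : (u : ℂ) + t * I ≠ 0 := fun h ↦ hu.ne' (by simpa using congrArg re h)
  have hπ : (π : ℂ) ≠ 0 := ofReal_ne_zero.mpr Real.pi_ne_zero
  rw [mul_inv, mul_inv, show (t : ℂ) - I * u = -I * (u + t * I) by ring_nf; rw [I_sq]; ring]
  field_simp
  rw [I_sq]
  ring

lemma integral_gaussian_mul_cexp (u y : ℝ) :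
    ∫ t : ℝ, (rexp (-(π * t ^ 2)) : ℂ) * cexp (-(2 * π * (u + t * I)) * y)
      = rexp (-(2 * π * u * y + π * y ^ 2)) := by
  have h (t : ℝ) : (rexp (-(π * t ^ 2)) : ℂ) * cexp (-(2 * π * (u + t * I)) * y)
      = cexp (-π * t ^ 2 + (-2 * π * y * I) * t + (-2 * π * u * y)) := by
    push_cast
    rw [← Complex.exp_add]
    ring_nf
  simp_rw [h]
  rw [integral_cexp_quadratic (by simp [Real.pi_pos])]
  have hπ : (π : ℂ) ≠ 0 := ofReal_ne_zero.mpr Real.pi_ne_zero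
  rw [neg_neg, div_self hπ, one_cpow, one_mul]
  push_cast
  congr 1
  field_simp
  rw [I_sq]
  ring

lemma integrable_gaussian_mul_cexp {u : ℝ} (hu : 0 < u) :
    Integrable (Function.uncurry fun t y : ℝ ↦
        (rexp (-(π * t ^ 2)) : ℂ) * cexp (-(2 * π * (u + t * I)) * y))
      (volume.prod (volume.restrict (Ioi 0))) := by
  refine Integrable.mono' (g := fun p : ℝ × ℝ ↦ rexp (-(π * p.1 ^ 2)) * rexp (-(2 * π * u) * p.2))
    ?_ (by fun_prop) (.of_forall fun p ↦ le_of_eq ?_)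
  · have hgauss : Integrable fun t : ℝ ↦ rexp (-(π * t ^ 2)) := by
      simpa [neg_mul] using integrable_exp_neg_mul_sq Real.pi_pos
    exact hgauss.mul_prod (exp_neg_integrableOn_Ioi 0 (by positivity))
  · simp only [Function.uncurry, norm_mul, Complex.norm_exp, Complex.norm_real, Real.norm_eq_abs,
      abs_of_pos (Real.exp_pos _)]
    simp

lemma integral_Ioi_exp_neg_pi_mul_sq (u : ℝ) :
    ∫ s in Ioi u, rexp (-(π * s ^ 2)) = 1 / 2 - ∫ s in (0 : ℝ)..u, rexp (-(π * s ^ 2)) := by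
  have hint (a : ℝ) : IntegrableOn (fun s : ℝ ↦ rexp (-(π * s ^ 2))) (Ioi a) := by
    simpa [neg_mul] using (integrable_exp_neg_mul_sq Real.pi_pos).integrableOn
  have h := intervalIntegral.integral_interval_add_Ioi (hint 0) (hint u)
  rw [show ∫ s in Ioi (0 : ℝ), rexp (-(π * s ^ 2)) = 1 / 2 by
    simpa [neg_mul, div_self Real.pi_ne_zero] using integral_gaussian_Ioi π] at h
  linarith

lemma integral_Ioi_exp_neg_linear_sub_pi_mul_sq (u : ℝ) :
    ∫ y in Ioi 0, rexp (-(2 * π * u * y + π * y ^ 2))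
      = rexp (π * u ^ 2) * ∫ s in Ioi u, rexp (-(π * s ^ 2)) := by
  have h (y : ℝ) : rexp (-(2 * π * u * y + π * y ^ 2))
      = rexp (π * u ^ 2) * rexp (-(π * (y + u) ^ 2)) := by
    rw [← Real.exp_add]; ring_nf
  simp_rw [h, integral_const_mul]
  congr 1
  have := (measurePreserving_add_right volume u).setIntegral_preimage_emb
    (measurableEmbedding_addRight u) (fun s ↦ rexp (-(π * s ^ 2))) (Ioi u)
  simpa using this

lemma integral_div_add_of_even {f : ℝ → ℂ} (hf : ∀ t, f (-t) = f t) (c : ℂ) :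
    ∫ t : ℝ, f t / (t + c) = -∫ t : ℝ, f t / (t - c) := by
  rw [← integral_neg_eq_self (fun t : ℝ ↦ f t / (t - c)), ← integral_neg]
  congr 1 with t
  rw [hf, ofReal_neg, show -(t : ℂ) - c = -(t + c) by ring, div_neg, neg_neg]

lemma M1_eval_of_pos {u : ℝ} (hu : 0 < u) :
    I / π * ∫ t : ℝ, (rexp (-(π * t ^ 2)) : ℂ) / (t - I * u)
      = ((-rexp (π * u ^ 2) * (1 - 2 * ∫ s in (0 : ℝ)..u, rexp (-(π * s ^ 2))) : ℝ) : ℂ) := by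
  set F : ℝ → ℝ → ℂ := fun t y ↦ (rexp (-(π * t ^ 2)) : ℂ) * cexp (-(2 * π * (u + t * I)) * y)
  have hrep (t : ℝ) : (rexp (-(π * t ^ 2)) : ℂ) / (t - I * u)
      = 2 * π * I * ∫ y in Ioi 0, F t y := by
    rw [div_eq_mul_inv, inv_sub_I_mul_eq_integral_Ioi hu, mul_left_comm, ← integral_const_mul]
  have hπ : (π : ℂ) ≠ 0 := ofReal_ne_zero.mpr Real.pi_ne_zero
  calc I / π * ∫ t : ℝ, (rexp (-(π * t ^ 2)) : ℂ) / (t - I * u)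
      = -2 * ∫ t : ℝ, ∫ y in Ioi 0, F t y := by
        simp_rw [hrep, integral_const_mul]
        field_simp
        rw [I_sq]
        ring
    _ = -2 * ∫ y in Ioi 0, ∫ t : ℝ, F t y := by
        rw [integral_integral_swap (integrable_gaussian_mul_cexp hu)]
    _ = -2 * ((∫ y in Ioi 0, rexp (-(2 * π * u * y + π * y ^ 2)) : ℝ) : ℂ) := by
        simp only [F, integral_gaussian_mul_cexp]
        rw [integral_complex_ofReal]
    _ = _ := by
        rw [integral_Ioi_exp_neg_linear_sub_pi_mul_sq, integral_Ioi_exp_neg_pi_mul_sq]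
        push_cast
        ring

/-- for `u ≠ 0`,
`(i/π) ∫_ℝ e^{−πt²}/(t − iu) dt = −sgn(u) e^{πu²} (1 − 2∫_0^{|u|} e^{−πs²} ds)`,
i.e. `M₁(u) = −sgn(u)·Erfc(√π |u|)`. -/
theorem M1_eval (u : ℝ) (hu : u ≠ 0) :
    (Complex.I / (Real.pi : ℂ)) *
        ∫ t : ℝ, (Real.exp (-(Real.pi * t ^ 2)) : ℂ) / ((t : ℂ) - Complex.I * (u : ℂ))
      = ((-(Real.sign u) * Real.exp (Real.pi * u ^ 2) *
          (1 - 2 * ∫ s in (0:ℝ)..|u|, Real.exp (-(Real.pi * s ^ 2))) : ℝ) : ℂ) := by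
  rcases hu.lt_or_gt with hneg | hpos
  · obtain ⟨v, hv, rfl⟩ : ∃ v, 0 < v ∧ u = -v := ⟨-u, by linarith, by ring⟩
    have hodd := integral_div_add_of_even (f := fun t ↦ (rexp (-(π * t ^ 2)) : ℂ))
      (fun t ↦ by rw [neg_sq]) (I * v)
    simp_rw [ofReal_neg, mul_neg, sub_neg_eq_add]
    rw [hodd, mul_neg, M1_eval_of_pos hv, Real.sign_of_neg hneg, abs_neg, abs_of_pos hv, neg_sq]
    push_cast
    ring
  · rw [Real.sign_of_pos hpos, abs_of_pos hpos, M1_eval_of_pos hpos]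
    push_cast
    ring
end

section
/- Let a, b ∈ ℝ² be such that a ≠ 0, b ≠ 0 and a + b ≠ 0. Then for every u ∈ ℝ²: ∫_{ℝ²} e^{−π‖u−w‖²} [ sgn(⟨a,w⟩)·sgn(⟨a+b,w⟩) + sgn(⟨b,w⟩)·sgn(⟨a+b,w⟩) − sgn(⟨a,w⟩)·sgn(⟨b,w⟩) ] dw = 1. Equivalently, the generalized error functions E_2(M;u) = ∫_{ℝ²} e^{−π‖u−w‖²} sgn(⟨m_1,w⟩)sgn(⟨m_2,w⟩) dw (for M with columns m_1, m_2) satisfy E_2((a, a+b); u) + E_2((b, a+b); u) = 1 + E_2((a, b); u). -/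
/-!
Since `⟪a + b, w⟫ = ⟪a, w⟫ + ⟪b, w⟫`, the bracket is `1` at every `w` off the three lines
`⟪a, w⟫ = 0`, `⟪b, w⟫ = 0`, `⟪a + b, w⟫ = 0`: writing `s`, `t`, `r` for the three signs there,
either `s = t = r`, or `s = -t` and `r ∈ {s, t}`. These lines are Lebesgue-null, so the integral is
that of the normalized Gaussian `e^{-π‖u - w‖²}`, which is `1`.
-/

open scoped RealInnerProductSpace

open MeasureTheory

theorem Real.sign_mul_sign_add_add_sign_mul_sign_add_sub_sign_mul_sign {x y : ℝ}
    (hx : x ≠ 0) (hy : y ≠ 0) (hxy : x + y ≠ 0) :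
    Real.sign x * Real.sign (x + y) + Real.sign y * Real.sign (x + y) -
      Real.sign x * Real.sign y = 1 := by
  rcases hx.lt_or_gt with hx | hx <;> rcases hy.lt_or_gt with hy | hy <;>
    rcases hxy.lt_or_gt with hxy | hxy <;>
    simp only [Real.sign_of_pos, Real.sign_of_neg, *] <;> norm_num <;> linarith

section InnerProductSpace

variable {V : Type*} [NormedAddCommGroup V] [InnerProductSpace ℝ V] [FiniteDimensional ℝ V]
  [MeasurableSpace V] [BorelSpace V]

theorem MeasureTheory.Measure.addHaar_setOf_inner_eq_zero (μ : Measure V) [μ.IsAddHaarMeasure] {a : V}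
    (ha : a ≠ 0) : μ {w | ⟪a, w⟫ = 0} = 0 := by
  have hline : {w : V | ⟪a, w⟫ = 0} = ((ℝ ∙ a)ᗮ : Submodule ℝ V) := by
    ext w
    exact Submodule.mem_orthogonal_singleton_iff_inner_right.symm
  rw [hline]
  exact Measure.addHaar_submodule μ _ (by simpa using ha)

theorem ae_inner_ne_zero (μ : Measure V) [μ.IsAddHaarMeasure] {a : V} (ha : a ≠ 0) :
    ∀ᵐ w ∂μ, ⟪a, w⟫ ≠ 0 :=
  ae_iff.mpr (by simpa only [not_not] using Measure.addHaar_setOf_inner_eq_zero μ ha)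

theorem integral_exp_neg_pi_mul_norm_sub_sq (u : V) :
    ∫ w : V, Real.exp (-(Real.pi * ‖u - w‖ ^ 2)) = 1 :=
  calc ∫ w : V, Real.exp (-(Real.pi * ‖u - w‖ ^ 2))
      _ = ∫ v : V, Real.exp (-Real.pi * ‖v‖ ^ 2) := by
        simp_rw [norm_sub_rev u, neg_mul]
        exact integral_sub_right_eq_self (fun v : V => Real.exp (-(Real.pi * ‖v‖ ^ 2))) u
      _ = 1 := by
        rw [GaussianFourier.integral_rexp_neg_mul_sq_norm Real.pi_pos, div_self Real.pi_ne_zero,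
          Real.one_rpow]

end InnerProductSpace

/-- for nonzero `a, b ∈ ℝ²` with `a + b ≠ 0` and any `u ∈ ℝ²`,
the Gaussian average of
`sgn⟨a,w⟩ sgn⟨a+b,w⟩ + sgn⟨b,w⟩ sgn⟨a+b,w⟩ − sgn⟨a,w⟩ sgn⟨b,w⟩` equals `1`,
i.e. `E₂((a,a+b);u) + E₂((b,a+b);u) = 1 + E₂((a,b);u)`. -/
theorem generalized_error_identity (a b : EuclideanSpace ℝ (Fin 2))
    (ha : a ≠ 0) (hb : b ≠ 0) (hab : a + b ≠ 0) (u : EuclideanSpace ℝ (Fin 2)) :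
    ∫ w : EuclideanSpace ℝ (Fin 2),
        Real.exp (-(Real.pi * ‖u - w‖ ^ 2)) *
          (Real.sign ⟪a, w⟫ * Real.sign ⟪a + b, w⟫ +
            Real.sign ⟪b, w⟫ * Real.sign ⟪a + b, w⟫ -
            Real.sign ⟪a, w⟫ * Real.sign ⟪b, w⟫) = 1 := by
  rw [← integral_exp_neg_pi_mul_norm_sub_sq u]
  refine integral_congr_ae ?_
  filter_upwards [ae_inner_ne_zero volume ha, ae_inner_ne_zero volume hb,
    ae_inner_ne_zero volume hab] with w hwa hwb hwab
  rw [inner_add_left] at hwab ⊢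
  rw [Real.sign_mul_sign_add_add_sign_mul_sign_add_sub_sign_mul_sign hwa hwb hwab, mul_one]
end

section
/- With the notation of the context, let I, J ⊆ {1,…,n} be disjoint nonempty subsets and K, L ⊆ {1,…,n} disjoint nonempty subsets, and suppose that either K ∪ L ⊆ I, or K ∪ L ⊆ J, or (K ∪ L) ∩ (I ∪ J) = ∅. Then ⟨ ∑_{i∈I} ∑_{j∈J} v_{ij} , ∑_{k∈K} ∑_{l∈L} v_{kl} ⟩ = 0. Consequently, for any rooted binary tree with leaf set {1,…,n}, the vectors ṽ_v = ∑_{i ∈ I_{L(v)}} ∑_{j ∈ I_{R(v)}} v_{ij} attached to distinct internal vertices v — where I_{L(v)} and I_{R(v)} denote the sets of leaves descending from the left and right child of v — are mutually orthogonal: ⟨ṽ_v, ṽ_{v'}⟩ = 0 for v ≠ v'. -/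
/-- The vector `v_{ij} ∈ (ℝ^b)^n`, with `k`-th component `δ_{ki} p_j − δ_{kj} p_i`. -/
def vvec {b n : ℕ} (p : Fin n → Fin b → ℝ) (i j : Fin n) : Fin n → Fin b → ℝ :=
  fun k => (if k = i then p j else 0) - (if k = j then p i else 0)

/-- The bilinear form `⟨x,y⟩ = ∑ᵢ κ(pᵢ, xᵢ, yᵢ)` on `(ℝ^b)^n`. -/
def bform {b n : ℕ} (κ : (Fin b → ℝ) → (Fin b → ℝ) → (Fin b → ℝ) → ℝ)
    (p : Fin n → Fin b → ℝ) (x y : Fin n → Fin b → ℝ) : ℝ :=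
  ∑ i, κ (p i) (x i) (y i)

/-- Rooted binary trees with leaves labelled by elements of `Fin n`. -/
inductive BTree (n : ℕ) : Type where
  | leaf : Fin n → BTree n
  | node : BTree n → BTree n → BTree n

/-- The list of leaf labels of a binary tree, from left to right. -/
def leafList {n : ℕ} : BTree n → List (Fin n)
  | .leaf i => [i]
  | .node l r => leafList l ++ leafList r

/-- `occursIn s t` means that `s` occurs as a subtree of `t`. -/
def occursIn {n : ℕ} (s : BTree n) : BTree n → Prop
  | .leaf i => s = .leaf i
  | .node l r => s = .node l r ∨ occursIn s l ∨ occursIn s r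

/-- The vector `ṽ_v = ∑_{i ∈ I_{L(v)}} ∑_{j ∈ I_{R(v)}} v_{ij}` attached to an internal
vertex, i.e. to a subtree of the form `node l r` (and `0` on leaves). -/
def tvec {b n : ℕ} (p : Fin n → Fin b → ℝ) : BTree n → (Fin n → Fin b → ℝ)
  | .leaf _ => 0
  | .node l r => ∑ i ∈ (leafList l).toFinset, ∑ j ∈ (leafList r).toFinset, vvec p i j

/-! Writing `P_S = ∑_{s ∈ S} p_s`, the vector `∑_{i∈I} ∑_{j∈J} v_{ij}` has component `P_J` on `I`
and `-P_I` on `J`, so by trilinearity the pairing of two such vectors is a signed sum of the four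
values `κ(P_{I∩K}, P_J, P_L)`, `κ(P_{I∩L}, P_J, P_K)`, `κ(P_{J∩K}, P_I, P_L)`, `κ(P_{J∩L}, P_I, P_K)`.
Under each of the three hypotheses every term either vanishes (`P_∅ = 0`) or cancels against
another one by the symmetry `κ(x, y, z) = κ(z, y, x)`. In a tree with distinct leaf labels, two
distinct internal vertices are either nested, and then one lies below a child of the other, or
have disjoint leaf sets; these are exactly the three cases. -/

open Finset

structure IsSymmTrilinear {R V : Type*} [CommRing R] [AddCommGroup V] [Module R V]
    (κ : V → V → V → R) : Prop where
  comm12 : ∀ x y z, κ x y z = κ y x z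
  comm23 : ∀ x y z, κ x y z = κ x z y
  map_add : ∀ x y z z', κ x y (z + z') = κ x y z + κ x y z'
  map_smul : ∀ (r : R) x y z, κ x y (r • z) = r * κ x y z

namespace IsSymmTrilinear

variable {R V ι : Type*} [CommRing R] [AddCommGroup V] [Module R V] {κ : V → V → V → R}
  (hκ : IsSymmTrilinear κ)

def linearMap (x y : V) : V →ₗ[R] R where
  toFun := κ x y
  map_add' := hκ.map_add x y
  map_smul' r z := hκ.map_smul r x y z

include hκ

theorem comm13 (x y z : V) : κ x y z = κ z y x := by
  rw [hκ.comm12, hκ.comm23, hκ.comm12]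

theorem map_sub_right (x y z z' : V) : κ x y (z - z') = κ x y z - κ x y z' :=
  (hκ.linearMap x y).map_sub z z'

theorem map_sub_middle (x y y' z : V) : κ x (y - y') z = κ x y z - κ x y' z := by
  rw [hκ.comm23, hκ.map_sub_right, hκ.comm23 x y, hκ.comm23 x y']

theorem map_zero_right (x y : V) : κ x y 0 = 0 :=
  (hκ.linearMap x y).map_zero

theorem map_zero_middle (x z : V) : κ x 0 z = 0 := by
  rw [hκ.comm23, hκ.map_zero_right]

theorem map_zero_left (y z : V) : κ 0 y z = 0 := by
  rw [hκ.comm13, hκ.map_zero_right]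

theorem map_sum_left (s : Finset ι) (f : ι → V) (y z : V) :
    κ (∑ i ∈ s, f i) y z = ∑ i ∈ s, κ (f i) y z := by
  rw [hκ.comm13]
  simp only [hκ.comm13 _ y z]
  exact map_sum (hκ.linearMap z y) f s

end IsSymmTrilinear

section Pairing

variable {b n : ℕ} {κ : (Fin b → ℝ) → (Fin b → ℝ) → (Fin b → ℝ) → ℝ}
  (hκ : IsSymmTrilinear κ) (p : Fin n → Fin b → ℝ)

theorem sum_sum_vvec (I J : Finset (Fin n)) :
    ∑ i ∈ I, ∑ j ∈ J, vvec p i j =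
      (I : Set (Fin n)).indicator (fun _ => ∑ j ∈ J, p j) -
        (J : Set (Fin n)).indicator (fun _ => ∑ i ∈ I, p i) := by
  ext1 m
  simp only [Finset.sum_apply, vvec, sum_sub_distrib, Pi.sub_apply, Set.indicator_apply,
    mem_coe]
  congr 1
  · rw [sum_comm]
    simp [sum_ite_eq]
  · simp only [sum_ite_eq]
    split <;> simp

include hκ

theorem bform_comm (x y : Fin n → Fin b → ℝ) : bform κ p x y = bform κ p y x :=
  sum_congr rfl fun _ _ => hκ.comm23 _ _ _

theorem bform_sub_left (x x' y : Fin n → Fin b → ℝ) :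
    bform κ p (x - x') y = bform κ p x y - bform κ p x' y := by
  simp only [bform, Pi.sub_apply, hκ.map_sub_middle, sum_sub_distrib]

theorem bform_sub_right (x y y' : Fin n → Fin b → ℝ) :
    bform κ p x (y - y') = bform κ p x y - bform κ p x y' := by
  simp only [bform, Pi.sub_apply, hκ.map_sub_right, sum_sub_distrib]

theorem bform_indicator (S T : Finset (Fin n)) (a c : Fin b → ℝ) :
    bform κ p ((S : Set (Fin n)).indicator fun _ => a) ((T : Set (Fin n)).indicator fun _ => c) =
      κ (∑ m ∈ S ∩ T, p m) a c := by
  rw [hκ.map_sum_left, ← univ_inter (S ∩ T), ← sum_ite_mem]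
  refine sum_congr rfl fun m _ => ?_
  by_cases hS : m ∈ S <;> by_cases hT : m ∈ T <;>
    simp [hS, hT, hκ.map_zero_middle, hκ.map_zero_right]

theorem bform_sum_vvec (I J K L : Finset (Fin n)) :
    bform κ p (∑ i ∈ I, ∑ j ∈ J, vvec p i j) (∑ k ∈ K, ∑ l ∈ L, vvec p k l) =
      κ (∑ m ∈ I ∩ K, p m) (∑ j ∈ J, p j) (∑ l ∈ L, p l)
        - κ (∑ m ∈ I ∩ L, p m) (∑ j ∈ J, p j) (∑ k ∈ K, p k)
        - (κ (∑ m ∈ J ∩ K, p m) (∑ i ∈ I, p i) (∑ l ∈ L, p l)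
          - κ (∑ m ∈ J ∩ L, p m) (∑ i ∈ I, p i) (∑ k ∈ K, p k)) := by
  simp only [sum_sum_vvec, bform_sub_left hκ, bform_sub_right hκ, bform_indicator hκ]

theorem bform_sum_vvec_eq_zero {I J K L : Finset (Fin n)}
    (hIJ : Disjoint I J) (h : K ∪ L ⊆ I ∨ K ∪ L ⊆ J ∨ Disjoint (K ∪ L) (I ∪ J)) :
    bform κ p (∑ i ∈ I, ∑ j ∈ J, vvec p i j) (∑ k ∈ K, ∑ l ∈ L, vvec p k l) = 0 := by
  rw [bform_sum_vvec hκ]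
  rcases h with h | h | h
  · have hK : K ⊆ I := union_subset_left h
    have hL : L ⊆ I := union_subset_right h
    rw [inter_eq_right.2 hK, inter_eq_right.2 hL,
      disjoint_iff_inter_eq_empty.1 (hIJ.symm.mono_right hK),
      disjoint_iff_inter_eq_empty.1 (hIJ.symm.mono_right hL), sum_empty, hκ.map_zero_left,
      hκ.map_zero_left, hκ.comm13 (∑ m ∈ K, p m)]
    ring
  · have hK : K ⊆ J := union_subset_left h
    have hL : L ⊆ J := union_subset_right h
    rw [inter_eq_right.2 hK, inter_eq_right.2 hL,
      disjoint_iff_inter_eq_empty.1 (hIJ.mono_right hK),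
      disjoint_iff_inter_eq_empty.1 (hIJ.mono_right hL), sum_empty, hκ.map_zero_left,
      hκ.map_zero_left, hκ.comm13 (∑ m ∈ K, p m)]
    ring
  · have h' := h.symm
    simp only [disjoint_union_left, disjoint_union_right] at h'
    simp only [disjoint_iff_inter_eq_empty.1 h'.1.1, disjoint_iff_inter_eq_empty.1 h'.1.2,
      disjoint_iff_inter_eq_empty.1 h'.2.1, disjoint_iff_inter_eq_empty.1 h'.2.2, sum_empty,
      hκ.map_zero_left, sub_self]

end Pairing

section Trees

variable {n : ℕ}

theorem occursIn_refl (T : BTree n) : occursIn T T := by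
  cases T <;> simp [occursIn]

theorem occursIn.leafList_infix {S T : BTree n} (h : occursIn S T) :
    leafList S <:+: leafList T := by
  induction T with
  | leaf j => rw [h]
  | node l r ihl ihr =>
    rcases h with rfl | h | h
    · exact List.infix_refl _
    · exact (ihl h).trans (List.infix_append [] _ _)
    · exact (ihr h).trans (List.suffix_append _ _).isInfix

theorem occursIn_total_or_disjoint {T S₁ S₂ : BTree n} (hT : (leafList T).Nodup)
    (h₁ : occursIn S₁ T) (h₂ : occursIn S₂ T) :
    occursIn S₁ S₂ ∨ occursIn S₂ S₁ ∨ (leafList S₁).Disjoint (leafList S₂) := by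
  induction T with
  | leaf j => left; rw [h₁, ← h₂]; exact occursIn_refl _
  | node l r ihl ihr =>
    obtain ⟨hl, hr, hlr⟩ := List.nodup_append'.1 hT
    rcases h₁ with rfl | h₁ | h₁
    · exact .inr (.inl h₂)
    all_goals rcases h₂ with rfl | h₂ | h₂
    · exact .inl (.inr (.inl h₁))
    · exact ihl hl h₁ h₂
    · exact .inr (.inr (List.disjoint_of_subset_left h₁.leafList_infix.subset
        (List.disjoint_of_subset_right h₂.leafList_infix.subset hlr)))
    · exact .inl (.inr (.inr h₁))
    · exact .inr (.inr (List.disjoint_of_subset_left h₁.leafList_infix.subset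
        (List.disjoint_of_subset_right h₂.leafList_infix.subset hlr.symm)))
    · exact ihr hr h₁ h₂

theorem occursIn.toFinset_leafList_subset {S T : BTree n} (h : occursIn S T) :
    (leafList S).toFinset ⊆ (leafList T).toFinset := fun _ hx =>
  List.mem_toFinset.2 (h.leafList_infix.subset (List.mem_toFinset.1 hx))

end Trees

theorem bform_tvec_node_eq_zero {b n : ℕ} {κ : (Fin b → ℝ) → (Fin b → ℝ) → (Fin b → ℝ) → ℝ}
    (hκ : IsSymmTrilinear κ) (p : Fin n → Fin b → ℝ) {l r l' r' : BTree n}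
    (hT : (leafList (.node l r)).Nodup) (hne : BTree.node l' r' ≠ .node l r)
    (h : occursIn (.node l' r') (.node l r) ∨
      (leafList (.node l' r')).Disjoint (leafList (.node l r))) :
    bform κ p (tvec p (.node l r)) (tvec p (.node l' r')) = 0 := by
  refine bform_sum_vvec_eq_zero hκ p
    (List.disjoint_toFinset_iff_disjoint.2 (List.nodup_append'.1 hT).2.2) ?_
  rw [← List.toFinset_append, ← List.toFinset_append]
  rcases h with (h | h | h) | h
  · exact absurd h hne
  · exact .inl h.toFinset_leafList_subset
  · exact .inr (.inl h.toFinset_leafList_subset)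
  · exact .inr (.inr (List.disjoint_toFinset_iff_disjoint.2 h))

/-- for disjoint nonempty `I, J` and disjoint nonempty `K, L` with
`K ∪ L ⊆ I`, or `K ∪ L ⊆ J`, or `(K ∪ L) ∩ (I ∪ J) = ∅`, one has
`⟨∑_{i∈I}∑_{j∈J} v_{ij}, ∑_{k∈K}∑_{l∈L} v_{kl}⟩ = 0`.  Consequently, for a rooted
binary tree with leaf set `{1,…,n}`, the vectors `ṽ_v` attached to distinct internal
vertices are mutually orthogonal. -/
theorem vvec_orthogonality (b n : ℕ)
    (κ : (Fin b → ℝ) → (Fin b → ℝ) → (Fin b → ℝ) → ℝ)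
    (hsymm12 : ∀ x y z, κ x y z = κ y x z)
    (hsymm23 : ∀ x y z, κ x y z = κ x z y)
    (hadd : ∀ x y z z', κ x y (z + z') = κ x y z + κ x y z')
    (hsmul : ∀ (r : ℝ) (x y z), κ x y (r • z) = r * κ x y z)
    (p : Fin n → Fin b → ℝ) :
    (∀ I J K L : Finset (Fin n), I.Nonempty → J.Nonempty → Disjoint I J →
      K.Nonempty → L.Nonempty → Disjoint K L →
      (K ∪ L ⊆ I ∨ K ∪ L ⊆ J ∨ Disjoint (K ∪ L) (I ∪ J)) →
      bform κ p (∑ i ∈ I, ∑ j ∈ J, vvec p i j) (∑ k ∈ K, ∑ l ∈ L, vvec p k l) = 0) ∧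
    (∀ T : BTree n, (leafList T).Nodup → (∀ i : Fin n, i ∈ leafList T) →
      ∀ T₁ T₂ : BTree n, occursIn T₁ T → occursIn T₂ T →
        (∃ l r, T₁ = BTree.node l r) → (∃ l r, T₂ = BTree.node l r) → T₁ ≠ T₂ →
        bform κ p (tvec p T₁) (tvec p T₂) = 0) := by
  have hκ : IsSymmTrilinear κ := ⟨hsymm12, hsymm23, hadd, hsmul⟩
  refine ⟨fun I J K L _ _ hIJ _ _ _ h => bform_sum_vvec_eq_zero hκ p hIJ h, ?_⟩
  rintro T hT - T₁ T₂ h₁ h₂ ⟨l₁, r₁, rfl⟩ ⟨l₂, r₂, rfl⟩ hne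
  have hT₁ := hT.sublist h₁.leafList_infix.sublist
  have hT₂ := hT.sublist h₂.leafList_infix.sublist
  rcases occursIn_total_or_disjoint hT h₁ h₂ with h | h | h
  · rw [bform_comm hκ]
    exact bform_tvec_node_eq_zero hκ p hT₂ hne (.inl h)
  · exact bform_tvec_node_eq_zero hκ p hT₁ hne.symm (.inl h)
  · exact bform_tvec_node_eq_zero hκ p hT₁ hne.symm (.inr h.symm)
end
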